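/- Let F = (X; f₁,…,f_N) be an injective point-fibred IFS on a compact Hausdorff space X with attractor A, coding map π, mask M = {M_i : i ∈ I}, masked dynamical system T, masked address space Ω_M, and masked section τ : A → Ω_M. If in addition every f_i is an open map, then τ is continuous at a point x ∈ A if and only if T^{k-1}(x) lies in the interior relative to A of M_{τ(x)_k} for every k = 1, 2, 3, …, where τ(x)_k denotes the k-th symbol of τ(x). -/

import Mathlib

/-! Continuity of the itinerary at `x` means that, for every `k`, all points of `A` near `x`
share the first `k` symbols of `x`. Pulling back along `f_{σ|k}` (continuous, and injective so
that it inverts `T^[k]` on points with the same first `k` symbols) turns this into the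
statement that points of `A` near `T^[k] x` lie in the same piece of the mask. Conversely,
pushing a relative neighbourhood of `T^[k] x` inside `M_{σ_k}` forward along the open map
`f_{σ|k}` gives a neighbourhood of `x` on which one more symbol is fixed. -/

open Set Topology Filter

/-- `seqComp f σ k` is the composition `f_{σ|k} = f_{σ₁} ∘ f_{σ₂} ∘ ⋯ ∘ f_{σ_k}`
(with the sequence `σ` indexed from `0`). -/
def seqComp {X : Type*} {N : ℕ} (f : Fin N → X → X) (σ : ℕ → Fin N) : ℕ → X → X
  | 0 => id
  | k + 1 => seqComp f σ k ∘ f (σ k)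

/-- `PiMap f σ = ⋂_{k ≥ 1} f_{σ₁} ∘ ⋯ ∘ f_{σ_k}(X)`. -/
def PiMap {X : Type*} {N : ℕ} (f : Fin N → X → X) (σ : ℕ → Fin N) : Set X :=
  ⋂ k : ℕ, seqComp f σ (k + 1) '' Set.univ

theorem continuousWithinAt_nat_pi_iff_eventually_prefix_eq {X α : Type*} [TopologicalSpace X]
    [TopologicalSpace α] [DiscreteTopology α] {g : X → ℕ → α} {s : Set X} {x : X} :
    ContinuousWithinAt g s x ↔ ∀ k, ∀ᶠ y in 𝓝[s] x, ∀ j < k, g y j = g x j := by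
  have hcoord : ∀ j, ContinuousWithinAt (g · j) s x ↔ ∀ᶠ y in 𝓝[s] x, g y j = g x j := fun j => by
    rw [ContinuousWithinAt, nhds_discrete, tendsto_pure]
  simp only [continuousWithinAt_pi, hcoord]
  constructor
  · intro h k
    simpa using (eventually_all_finset (Finset.range k)).2 fun j _ => h j
  · exact fun h k => (h (k + 1)).mono fun y hy => hy k k.lt_succ_self

section SeqComp

variable {X : Type*} {N : ℕ} {f : Fin N → X → X}

theorem continuous_seqComp [TopologicalSpace X] (hf : ∀ i, Continuous (f i))
    (σ : ℕ → Fin N) : ∀ k, Continuous (seqComp f σ k)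
  | 0 => continuous_id
  | k + 1 => (continuous_seqComp hf σ k).comp (hf _)

theorem injective_seqComp (hf : ∀ i, Function.Injective (f i)) (σ : ℕ → Fin N) :
    ∀ k, Function.Injective (seqComp f σ k)
  | 0 => Function.injective_id
  | k + 1 => (injective_seqComp hf σ k).comp (hf _)

theorem isOpenMap_seqComp [TopologicalSpace X] (hf : ∀ i, IsOpenMap (f i))
    (σ : ℕ → Fin N) : ∀ k, IsOpenMap (seqComp f σ k)
  | 0 => IsOpenMap.id
  | k + 1 => (isOpenMap_seqComp hf σ k).comp (hf _)

theorem mapsTo_seqComp {A : Set X} (hfA : ∀ i, MapsTo (f i) A A) (σ : ℕ → Fin N) :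
    ∀ k, MapsTo (seqComp f σ k) A A
  | 0 => mapsTo_id A
  | k + 1 => (mapsTo_seqComp hfA σ k).comp (hfA _)

theorem seqComp_congr {σ σ' : ℕ → Fin N} :
    ∀ {k}, (∀ j < k, σ j = σ' j) → seqComp f σ k = seqComp f σ' k
  | 0, _ => rfl
  | k + 1, h => by
    simp only [seqComp, seqComp_congr fun j hj => h j (Nat.lt_succ_of_lt hj), h k k.lt_succ_self]

theorem seqComp_cons (i : Fin N) (σ : ℕ → Fin N) :
    ∀ k, seqComp f (Stream'.cons i σ) (k + 1) = f i ∘ seqComp f σ k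
  | 0 => rfl
  | k + 1 => congrArg (· ∘ f (σ k)) (seqComp_cons i σ k)

theorem mapsTo_piMap_cons (i : Fin N) (σ : ℕ → Fin N) :
    MapsTo (f i) (PiMap f σ) (PiMap f (Stream'.cons i σ)) := by
  intro x hx
  refine mem_iInter.2 fun k => ?_
  rw [seqComp_cons, image_comp]
  cases k with
  | zero => exact mem_image_of_mem _ ⟨x, mem_univ x, rfl⟩
  | succ m => exact mem_image_of_mem _ (mem_iInter.1 hx m)

theorem mapsTo_range_of_piMap_eq_singleton {π : (ℕ → Fin N) → X}
    (hπ : ∀ σ, PiMap f σ = {π σ}) (i : Fin N) : MapsTo (f i) (range π) (range π) := by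
  rintro _ ⟨σ, rfl⟩
  have h := mapsTo_piMap_cons i σ (hπ σ ▸ mem_singleton (π σ))
  rw [hπ (Stream'.cons i σ)] at h
  exact ⟨_, h.symm⟩

end SeqComp

section Itinerary

variable {X : Type*} {N : ℕ} {f : Fin N → X → X} {A : Set X} {M : Fin N → Set X}
  {T : X → X} {sym : X → ℕ → Fin N}

theorem seqComp_itinerary_iterate (hT : ∀ i, ∀ x ∈ M i, f i (T x) = x)
    (hsym : ∀ x ∈ A, ∀ k : ℕ, T^[k] x ∈ M (sym x k)) {x : X} (hx : x ∈ A) :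
    ∀ k, seqComp f (sym x) k (T^[k] x) = x
  | 0 => rfl
  | k + 1 => by
    simp only [seqComp, Function.comp_apply, Function.iterate_succ_apply',
      hT _ _ (hsym x hx k), seqComp_itinerary_iterate hT hsym hx k]

theorem iterate_eq_of_seqComp_eq (hfinj : ∀ i, Function.Injective (f i))
    (hT : ∀ i, ∀ x ∈ M i, f i (T x) = x) (hsym : ∀ x ∈ A, ∀ k : ℕ, T^[k] x ∈ M (sym x k))
    {σ : ℕ → Fin N} {k : ℕ} {y u : X} (hy : y ∈ A) (hprefix : ∀ j < k, sym y j = σ j)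
    (hu : seqComp f σ k u = y) : T^[k] y = u :=
  injective_seqComp hfinj σ k <| by
    rw [hu, ← seqComp_congr hprefix, seqComp_itinerary_iterate hT hsym hy]

theorem itinerary_eq_of_iterate_mem (hdisj : ∀ i j, i ≠ j → M i ∩ M j = ∅)
    (hsym : ∀ x ∈ A, ∀ k : ℕ, T^[k] x ∈ M (sym x k)) {x : X} (hx : x ∈ A) {k : ℕ} {i : Fin N}
    (h : T^[k] x ∈ M i) : sym x k = i := by
  by_contra hne
  simpa [hdisj _ _ hne] using mem_inter (hsym x hx k) h

theorem mask_mem_nhdsWithin_iterate_of_eventually_prefix_eq [TopologicalSpace X]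
    (hf : ∀ i, Continuous (f i)) (hfinj : ∀ i, Function.Injective (f i))
    (hfA : ∀ i, MapsTo (f i) A A) (hT : ∀ i, ∀ x ∈ M i, f i (T x) = x)
    (hsym : ∀ x ∈ A, ∀ k : ℕ, T^[k] x ∈ M (sym x k)) {x : X} (hx : x ∈ A) {k : ℕ}
    (h : ∀ᶠ y in 𝓝[A] x, ∀ j < k + 1, sym y j = sym x j) :
    M (sym x k) ∈ 𝓝[A] (T^[k] x) := by
  set φ := seqComp f (sym x) k
  have hφ : Tendsto φ (𝓝[A] (T^[k] x)) (𝓝[A] x) := by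
    have := (continuous_seqComp hf (sym x) k).continuousWithinAt.tendsto_nhdsWithin
      (x := T^[k] x) (mapsTo_seqComp hfA (sym x) k)
    rwa [seqComp_itinerary_iterate hT hsym hx k] at this
  filter_upwards [hφ.eventually h, self_mem_nhdsWithin] with u hprefix hu
  have hφuA : φ u ∈ A := mapsTo_seqComp hfA _ k hu
  have hTk : T^[k] (φ u) = u :=
    iterate_eq_of_seqComp_eq hfinj hT hsym hφuA (fun j hj => hprefix j (by omega)) rfl
  have hmem := hsym _ hφuA k
  rwa [hTk, hprefix k k.lt_succ_self] at hmem

theorem eventually_prefix_eq_of_mask_mem_nhdsWithin_iterate [TopologicalSpace X]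
    (hfopen : ∀ i, IsOpenMap (f i)) (hfinj : ∀ i, Function.Injective (f i))
    (hMA : ∀ i, M i ⊆ A) (hdisj : ∀ i j, i ≠ j → M i ∩ M j = ∅)
    (hT : ∀ i, ∀ x ∈ M i, f i (T x) = x) (hsym : ∀ x ∈ A, ∀ k : ℕ, T^[k] x ∈ M (sym x k))
    {x : X} (hx : x ∈ A) (h : ∀ k, M (sym x k) ∈ 𝓝[A] (T^[k] x)) :
    ∀ k, ∀ᶠ y in 𝓝[A] x, ∀ j < k, sym y j = sym x j
  | 0 => Eventually.of_forall fun _ j hj => absurd hj j.not_lt_zero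
  | k + 1 => by
    obtain ⟨t, ht, htM⟩ := mem_nhdsWithin_iff_exists_mem_nhds_inter.1 (h k)
    have himage : seqComp f (sym x) k '' t ∈ 𝓝 x := by
      simpa [seqComp_itinerary_iterate hT hsym hx k] using
        isOpenMap_seqComp hfopen (sym x) k |>.image_mem_nhds ht
    filter_upwards [eventually_prefix_eq_of_mask_mem_nhdsWithin_iterate hfopen hfinj hMA hdisj
      hT hsym hx h k, mem_nhdsWithin_of_mem_nhds himage, self_mem_nhdsWithin]
      with y hprefix ⟨u, hut, hu⟩ hy
    have hTk : T^[k] y = u := iterate_eq_of_seqComp_eq hfinj hT hsym hy hprefix hu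
    have huM : u ∈ M (sym x k) := htM ⟨hut, hTk ▸ hMA _ (hsym y hy k)⟩
    intro j hj
    rcases Nat.lt_succ_iff_lt_or_eq.1 hj with hj | rfl
    · exact hprefix j hj
    · exact itinerary_eq_of_iterate_mem hdisj hsym hy (hTk ▸ huM)

end Itinerary

theorem maskedSection_continuousAt_iff_general
    {X : Type*} [TopologicalSpace X]
    {N : ℕ} (f : Fin N → X → X) (hf : ∀ i, Continuous (f i))
    (hfinj : ∀ i, Function.Injective (f i))
    (hfopen : ∀ i, IsOpenMap (f i))
    (π : (ℕ → Fin N) → X) (hπ : ∀ σ, PiMap f σ = {π σ})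
    -- `M` is a mask for `F` (the attractor is `A = Set.range π`):
    (M : Fin N → Set X)
    (hM₂ : ∀ i j, i ≠ j → M i ∩ M j = ∅)
    (hM₃ : ⋃ i, M i = Set.range π)
    -- `T` is the associated masked dynamical system, i.e. `T x = fᵢ⁻¹ x` on `Mᵢ`:
    (T : X → X) (hT : ∀ i, ∀ x ∈ M i, f i (T x) = x)
    -- `sym x` is the itinerary of `x ∈ A` under `T` (the masked section `τ`):
    (sym : X → ℕ → Fin N)
    (hsym : ∀ x ∈ Set.range π, ∀ k : ℕ, T^[k] x ∈ M (sym x k)) :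
    ∀ x ∈ Set.range π,
      (ContinuousWithinAt sym (Set.range π) x ↔
        ∀ k : ℕ, ∃ U : Set X, IsOpen U ∧ T^[k] x ∈ U ∧
          U ∩ Set.range π ⊆ M (sym x k)) := by
  intro x hx
  simp only [← mem_nhdsWithin, continuousWithinAt_nat_pi_iff_eventually_prefix_eq]
  have hfA := mapsTo_range_of_piMap_eq_singleton hπ
  have hMA : ∀ i, M i ⊆ Set.range π := fun i => hM₃ ▸ subset_iUnion M i
  exact ⟨fun h k => mask_mem_nhdsWithin_iterate_of_eventually_prefix_eq hf hfinj hfA hT hsym hx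
      (h (k + 1)),
    eventually_prefix_eq_of_mask_mem_nhdsWithin_iterate hfopen hfinj hMA hM₂ hT hsym hx⟩

/-- Let `F` be an injective and open point-fibred IFS on a compact
Hausdorff space with attractor `A = range π`, mask `M`, masked dynamical system `T`, and
masked section `τ = sym : A → Ω_M` (the itinerary map). Then `τ` is continuous at
`x ∈ A` if and only if for every `k`, the point `T^[k] x` lies in the interior of
`M (sym x k)` relative to `A` (membership in the relative interior being spelled out as
the existence of an open `U ⊆ X` with `T^[k] x ∈ U` and `U ∩ A ⊆ M (sym x k)`). -/
theorem maskedSection_continuousAt_iff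
    {X : Type*} [TopologicalSpace X] [CompactSpace X] [T2Space X] [Nonempty X]
    {N : ℕ} (f : Fin N → X → X) (hf : ∀ i, Continuous (f i))
    (hfinj : ∀ i, Function.Injective (f i))
    (hfopen : ∀ i, IsOpenMap (f i))
    (π : (ℕ → Fin N) → X) (hπ : ∀ σ, PiMap f σ = {π σ})
    -- `M` is a mask for `F` (the attractor is `A = Set.range π`):
    (M : Fin N → Set X)
    (hM₁ : ∀ i, M i ⊆ f i '' Set.range π)
    (hM₂ : ∀ i j, i ≠ j → M i ∩ M j = ∅)
    (hM₃ : ⋃ i, M i = Set.range π)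
    -- `T` is the associated masked dynamical system, i.e. `T x = fᵢ⁻¹ x` on `Mᵢ`:
    (T : X → X) (hT : ∀ i, ∀ x ∈ M i, f i (T x) = x)
    -- `sym x` is the itinerary of `x ∈ A` under `T` (the masked section `τ`):
    (sym : X → ℕ → Fin N)
    (hsym : ∀ x ∈ Set.range π, ∀ k : ℕ, T^[k] x ∈ M (sym x k)) :
    ∀ x ∈ Set.range π,
      (ContinuousWithinAt sym (Set.range π) x ↔
        ∀ k : ℕ, ∃ U : Set X, IsOpen U ∧ T^[k] x ∈ U ∧
          U ∩ Set.range π ⊆ M (sym x k)) :=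
  maskedSection_continuousAt_iff_general f hf hfinj hfopen π hπ M hM₂ hM₃ T hT sym hsym
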